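/- A nontrivial totally ordered Wajsberg hoop either has a least element or is cancellative. Precisely: if A is a totally ordered Wajsberg hoop with more than one element and A has no least element, then A satisfies x → (x·y) = y for all x, y ∈ A. -/
import Mathlib


/-- A hoop: a commutative monoid (with unit `1` playing the role of `⊤`)
with an operation `⇨` satisfying the hoop identities; the underlying order
is given by `a ≤ b ↔ a ⇨ b = 1`. -/
class Hoop (A : Type*) extends CommMonoid A, HImp A, PartialOrder A where
  le_iff : ∀ a b : A, a ≤ b ↔ a ⇨ b = 1
  himp_self : ∀ x : A, x ⇨ x = 1
  mul_himp_comm : ∀ x y : A, x * (x ⇨ y) = y * (y ⇨ x)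
  himp_himp : ∀ x y z : A, x ⇨ (y ⇨ z) = (x * y) ⇨ z

/-- A Wajsberg hoop: a hoop satisfying `(x ⇨ y) ⇨ y = (y ⇨ x) ⇨ x`. -/
class WajsbergHoop (A : Type*) extends Hoop A where
  wajsberg : ∀ x y : A, (x ⇨ y) ⇨ y = (y ⇨ x) ⇨ x

section HoopLemmas

variable {A : Type*} [Hoop A]

lemma Hoop.one_himp (x : A) : (1 : A) ⇨ x = x := by
  have h1 : x ≤ (1 : A) ⇨ x := by
    rw [Hoop.le_iff, Hoop.himp_himp, mul_one, Hoop.himp_self]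
  have h2 : (1 : A) ⇨ x ≤ x := by
    rw [Hoop.le_iff]
    have := Hoop.himp_himp ((1 : A) ⇨ x) (1 : A) x
    rw [mul_one] at this
    rw [← this, Hoop.himp_self]
  exact le_antisymm h2 h1

lemma Hoop.himp_one (x : A) : x ⇨ (1 : A) = 1 := by
  have hx : x * (x ⇨ (1 : A)) = x := by
    rw [Hoop.mul_himp_comm, Hoop.one_himp, one_mul]
  have : (x ⇨ (1 : A)) ⇨ (x ⇨ (1 : A)) = x ⇨ (1 : A) := by
    conv_lhs => rw [Hoop.himp_himp, mul_comm, hx]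
  rw [← this, Hoop.himp_self]

lemma Hoop.le_one (x : A) : x ≤ (1 : A) := by
  rw [Hoop.le_iff]; exact Hoop.himp_one x

lemma Hoop.mul_le_left (a b : A) : a * b ≤ a := by
  rw [Hoop.le_iff, mul_comm, ← Hoop.himp_himp, Hoop.himp_self, Hoop.himp_one]

lemma Hoop.le_himp_mul (x c : A) : c ≤ x ⇨ (x * c) := by
  rw [Hoop.le_iff, Hoop.himp_himp, mul_comm, Hoop.himp_self]

end HoopLemmas

/-- A nontrivial totally ordered Wajsberg hoop with no least element is cancellative. -/
theorem wajsberg_cancellative_of_no_least {A : Type*} [WajsbergHoop A]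
    (htotal : ∀ a b : A, a ≤ b ∨ b ≤ a) (hnt : Nontrivial A)
    (hnoleast : ¬ ∃ m : A, ∀ x : A, m ≤ x) :
    ∀ x y : A, x ⇨ (x * y) = y := by
  intro x y
  set c := x ⇨ (x * y) with hc
  -- y ≤ c
  have hyc : y ≤ c := by
    rw [Hoop.le_iff, hc, Hoop.himp_himp, mul_comm, Hoop.himp_self]
  -- x * c = x * y
  have hxc : x * c = x * y := by
    apply le_antisymm
    · rw [hc, Hoop.mul_himp_comm]
      exact Hoop.mul_le_left (x * y) ((x * y) ⇨ x)
    · have h1 : y ≤ x ⇨ (x * c) := le_trans hyc (Hoop.le_himp_mul x c)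
      rw [Hoop.le_iff, Hoop.himp_himp] at h1
      rw [Hoop.le_iff, mul_comm x y]
      exact h1
  -- d with c * d = y
  set d := c ⇨ y with hd
  have hcd : c * d = y := by
    rw [hd, Hoop.mul_himp_comm]
    have : y ⇨ c = 1 := (Hoop.le_iff y c).mp hyc
    rw [this, mul_one]
  set z := x * c with hz
  have hzd : z * d = z := by
    rw [hz, mul_assoc, hcd, ← hxc]
  -- If d ≠ 1, z is a least element
  have hd1 : d = 1 := by
    by_contra hdne
    apply hnoleast
    refine ⟨z, fun w => ?_⟩
    set g := z ⇨ w with hg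
    have hdg : d ⇨ g = g := by
      rw [hg, Hoop.himp_himp, mul_comm, hzd]
    -- g ⇨ d ≤ d
    have h1 : (g ⇨ d) ⇨ d = 1 := by
      rw [← WajsbergHoop.wajsberg, hdg, Hoop.himp_self]
    have h2 : g ⇨ d ≤ d := (Hoop.le_iff _ _).mpr h1
    -- d ≤ g ⇨ d
    have h3 : d ≤ g ⇨ d := by
      rw [Hoop.le_iff, Hoop.himp_himp, mul_comm, ← Hoop.himp_himp,
        Hoop.himp_self, Hoop.himp_one]
    have hgd : g ⇨ d = d := le_antisymm h2 h3
    rcases htotal g d with hle | hle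
    · exact absurd (by rw [← hgd, (Hoop.le_iff g d).mp hle] : d = 1) hdne
    · have : d ⇨ g = 1 := (Hoop.le_iff d g).mp hle
      rw [hdg] at this
      rw [Hoop.le_iff, ← hg]
      exact this
  have hcy : c ≤ y := (Hoop.le_iff c y).mpr hd1
  exact le_antisymm hcy hyc
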